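/- A fibration f : X → B in a tribe E is a homotopy equivalence in E if and only if the object (X, f) of the local tribe E(B) is contractible, i.e. the map (X, f) → (B, 1_B) to the terminal object of E(B) is a homotopy equivalence in the tribe E(B). -/

import Mathlib

open CategoryTheory CategoryTheory.Limits

universe w v u v' u' v'' u''

/-- A *clan* structure on a category `E`: a terminal object together with a class of
maps (the *fibrations*) containing the isomorphisms, closed under composition and
base changes (every fibration is carrable and any pullback of a fibration is a
fibration), and containing every map to the terminal object. -/
structure Clan (E : Type u) [Category.{v} E] where
  fib : MorphismProperty E
  one : E
  one_isTerminal : IsTerminal one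
  fib_of_isIso : ∀ ⦃A B : E⦄ (f : A ⟶ B), IsIso f → fib f
  fib_comp : ∀ ⦃A B C : E⦄ {f : A ⟶ B} {g : B ⟶ C}, fib f → fib g → fib (f ≫ g)
  carrable : ∀ ⦃A B X : E⦄ (f : A ⟶ B) ⦃p : X ⟶ B⦄, fib p →
    ∃ (P : E) (p₁ : P ⟶ A) (p₂ : P ⟶ X), IsPullback p₁ p₂ f p
  fib_baseChange : ∀ ⦃P A X B : E⦄ {p₁ : P ⟶ A} {p₂ : P ⟶ X} {f : A ⟶ B} {p : X ⟶ B},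
    IsPullback p₁ p₂ f p → fib p → fib p₁
  fib_toOne : ∀ X : E, fib (one_isTerminal.from X)

/-- A *morphism of clans* is a functor taking fibrations to fibrations, preserving
base changes of fibrations, and taking the terminal object to a terminal object. -/
structure IsClanMorphism {E : Type u} {E' : Type u'} [Category.{v} E] [Category.{v'} E']
    (C : Clan E) (D : Clan E') (F : E ⥤ E') : Prop where
  map_fib : ∀ ⦃A B : E⦄ (f : A ⟶ B), C.fib f → D.fib (F.map f)
  map_isPullback : ∀ ⦃P A X B : E⦄ {p₁ : P ⟶ A} {p₂ : P ⟶ X} {f : A ⟶ B} {p : X ⟶ B},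
    IsPullback p₁ p₂ f p → C.fib p →
      IsPullback (F.map p₁) (F.map p₂) (F.map f) (F.map p)
  preserves_terminal : Nonempty (IsTerminal (F.obj C.one))

/-- The local category `E(A)`: the full subcategory of `Over A` spanned by the
fibrations `X ↠ A`. -/
abbrev ClanSlice {E : Type u} [Category.{v} E] (C : Clan E) (A : E) :=
  ObjectProperty.FullSubcategory (fun X : Over A => C.fib X.hom)

/-- The underlying morphism of `Over A` of a morphism of `ClanSlice C A`. -/
def ClanSlice.homOf {E : Type u} [Category.{v} E] {C : Clan E} {A : E}
    {X Y : ClanSlice C A} (u : X ⟶ Y) : X.obj ⟶ Y.obj := u.hom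

/-- A map in a clan is *anodyne* if it has the left lifting property with respect to
every fibration. -/
def Anodyne {E : Type u} [Category.{v} E] (C : Clan E) : MorphismProperty E :=
  fun _ _ u => ∀ ⦃X Y : E⦄ (f : X ⟶ Y), C.fib f → HasLiftingProperty u f

/-- A *tribe* is a clan in which every map factors as an anodyne map followed by a
fibration, and every base change of an anodyne map along a fibration is anodyne. -/
structure Tribe (E : Type u) [Category.{v} E] extends Clan E where
  exists_fact : ∀ ⦃A B : E⦄ (f : A ⟶ B), ∃ (Z : E) (u : A ⟶ Z) (p : Z ⟶ B),
    Anodyne toClan u ∧ fib p ∧ u ≫ p = f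
  anodyne_baseChange : ∀ ⦃P A X B : E⦄ {p₁ : P ⟶ A} {p₂ : P ⟶ X} {f : A ⟶ B} {u : X ⟶ B},
    IsPullback p₁ p₂ f u → fib f → Anodyne toClan u → Anodyne toClan p₁

/-- A *path object* for `B`: a factorization of the diagonal `B ⟶ B × B` as an
anodyne map `σ` followed by a fibration `(∂₀, ∂₁)`.  The product `B × B` is
witnessed by a pullback square over the terminal object. -/
structure PathObj {E : Type u} [Category.{v} E] (T : Tribe E) (B : E) where
  P : E
  σ : B ⟶ P
  d₀ : P ⟶ B
  d₁ : P ⟶ B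
  σ_d₀ : σ ≫ d₀ = 𝟙 B
  σ_d₁ : σ ≫ d₁ = 𝟙 B
  anodyne_σ : Anodyne T.toClan σ
  BB : E
  pr₁ : BB ⟶ B
  pr₂ : BB ⟶ B
  isProd : IsPullback pr₁ pr₂ (T.one_isTerminal.from B) (T.one_isTerminal.from B)
  pair : P ⟶ BB
  pair_pr₁ : pair ≫ pr₁ = d₀
  pair_pr₂ : pair ≫ pr₂ = d₁
  fib_pair : T.fib pair

/-- Two maps `f g : A ⟶ B` in a tribe are *homotopic* if there are a path object for
`B` and a homotopy `H : A ⟶ PB` with `∂₀ ∘ H = f` and `∂₁ ∘ H = g`. -/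
def Homotopic {E : Type u} [Category.{v} E] (T : Tribe E) {A B : E} (f g : A ⟶ B) : Prop :=
  ∃ (Q : PathObj T B) (H : A ⟶ Q.P), H ≫ Q.d₀ = f ∧ H ≫ Q.d₁ = g

/-- A map is a *homotopy equivalence* if it admits a homotopy inverse. -/
def IsHomotopyEquiv {E : Type u} [Category.{v} E] (T : Tribe E) {X Y : E} (f : X ⟶ Y) : Prop :=
  ∃ g : Y ⟶ X, Homotopic T (f ≫ g) (𝟙 X) ∧ Homotopic T (g ≫ f) (𝟙 Y)

/-- The local category `E(A)` of a tribe: the full subcategory of `Over A` spanned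
by the fibrations `X ↠ A`. -/
abbrev TribeSlice {E : Type u} [Category.{v} E] (T : Tribe E) (A : E) :=
  ObjectProperty.FullSubcategory (fun X : Over A => T.fib X.hom)

/-- The underlying morphism of `Over A` of a morphism of `TribeSlice T A`. -/
def TribeSlice.homOf {E : Type u} [Category.{v} E] {T : Tribe E} {A : E}
    {X Y : TribeSlice T A} (u : X ⟶ Y) : X.obj ⟶ Y.obj := u.hom

/-- A *morphism of tribes* is a morphism of clans that moreover takes anodyne maps
to anodyne maps. -/
structure IsTribeMorphism {E : Type u} {E' : Type u'} [Category.{v} E] [Category.{v'} E']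
    (T : Tribe E) (T' : Tribe E') (F : E ⥤ E')
    extends IsClanMorphism T.toClan T'.toClan F : Prop where
  map_anodyne : ∀ ⦃A B : E⦄ (u : A ⟶ B), Anodyne T.toClan u → Anodyne T'.toClan (F.map u)

/-- The homotopy relation, as a `HomRel`; the homotopy category `Ho(E)` is the
quotient of `E` by this congruence. -/
def HoRel {E : Type u} [Category.{v} E] (T : Tribe E) : HomRel E :=
  fun {_ _} f g => Homotopic T f g

/-!
A homotopy between two maps into `B` extends along any anodyne map (lift the anodyne map
against the fibration `PB ↠ B × B`); this single fact gives postcomposition and transitivity.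

If the fibration `f : X ↠ B` is a homotopy equivalence, homotopy lifting turns a homotopy
inverse into a strict section `s`, which is again a homotopy inverse. Factoring `s` in `E(B)`
as an anodyne map `u : B → Z` followed by a fibration `q : Z ↠ X`, the object `Z` deformation
retracts onto `B` in `E(B)`, and `q` has a strict section by homotopy lifting once more; so
`(X, f)` is a retract of the contractible object `Z` and is contractible itself. Conversely,
a homotopy inverse of `(X, f) → (B, 1_B)` is a section of `f`, and homotopies in `E(B)` are
homotopies in `E` because anodyne maps of `E(B)` are anodyne in `E`.
-/

variable {E : Type u} [Category.{v} E]

lemma Anodyne.exists_lift {C : Clan E} {A D X Y : E} {u : A ⟶ D} (hu : Anodyne C u)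
    {p : X ⟶ Y} (hp : C.fib p) {a : A ⟶ X} {b : D ⟶ Y} (w : a ≫ p = u ≫ b) :
    ∃ l : D ⟶ X, u ≫ l = a ∧ l ≫ p = b := by
  obtain ⟨⟨l, h₁, h₂⟩⟩ := ((hu p hp).sq_hasLift (CommSq.mk w)).exists_lift
  exact ⟨l, h₁, h₂⟩

namespace PathObj

variable {T : Tribe E} {B : E} (Q : PathObj T B)

lemma nonempty (B : E) : Nonempty (PathObj T B) := by
  obtain ⟨BB, pr₁, pr₂, hBB⟩ := T.carrable (T.one_isTerminal.from B) (T.fib_toOne B)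
  obtain ⟨P, σ, pair, hσ, hpair, hfact⟩ := T.exists_fact (hBB.lift (𝟙 B) (𝟙 B) rfl)
  refine ⟨⟨P, σ, pair ≫ pr₁, pair ≫ pr₂, ?_, ?_, hσ, BB, pr₁, pr₂, hBB, pair, rfl, rfl, hpair⟩⟩
  · rw [← Category.assoc, hfact, hBB.lift_fst]
  · rw [← Category.assoc, hfact, hBB.lift_snd]

lemma fib_d₀ : T.fib Q.d₀ := by
  rw [← Q.pair_pr₁]
  exact T.fib_comp Q.fib_pair (T.fib_baseChange Q.isProd (T.fib_toOne B))

def symm : PathObj T B where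
  P := Q.P
  σ := Q.σ
  d₀ := Q.d₁
  d₁ := Q.d₀
  σ_d₀ := Q.σ_d₁
  σ_d₁ := Q.σ_d₀
  anodyne_σ := Q.anodyne_σ
  BB := Q.BB
  pr₁ := Q.pr₂
  pr₂ := Q.pr₁
  isProd := Q.isProd.flip
  pair := Q.pair
  pair_pr₁ := Q.pair_pr₂
  pair_pr₂ := Q.pair_pr₁
  fib_pair := Q.fib_pair

lemma fib_d₁ : T.fib Q.d₁ := Q.symm.fib_d₀

/-- The inclusion of `Y` into the mapping path space `Y ×_B PB` of `p`, a base change of `σ`. -/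
lemma anodyne_lift_σ {Y W : E} {p : Y ⟶ B} (hp : T.fib p) {w₁ : W ⟶ Y} {w₂ : W ⟶ Q.P}
    (h : IsPullback w₁ w₂ p Q.d₀) :
    Anodyne T.toClan (h.lift (𝟙 Y) (p ≫ Q.σ) (by simp [Q.σ_d₀])) :=
  T.anodyne_baseChange
    (IsPullback.of_right' (Q.σ_d₀ ▸ IsPullback.id_horiz p) h)
    (T.fib_baseChange h.flip hp) Q.anodyne_σ

end PathObj

namespace Homotopic

variable {T : Tribe E}

lemma refl {A B : E} (f : A ⟶ B) : Homotopic T f f := by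
  obtain ⟨Q⟩ := PathObj.nonempty (T := T) B
  exact ⟨Q, f ≫ Q.σ, by rw [Category.assoc, Q.σ_d₀, Category.comp_id],
    by rw [Category.assoc, Q.σ_d₁, Category.comp_id]⟩

lemma symm {A B : E} {f g : A ⟶ B} (h : Homotopic T f g) : Homotopic T g f := by
  obtain ⟨Q, H, h₀, h₁⟩ := h
  exact ⟨Q.symm, H, h₁, h₀⟩

lemma comp_left {Z A B : E} (w : Z ⟶ A) {f g : A ⟶ B} (h : Homotopic T f g) :
    Homotopic T (w ≫ f) (w ≫ g) := by
  obtain ⟨Q, H, h₀, h₁⟩ := h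
  exact ⟨Q, w ≫ H, by rw [Category.assoc, h₀], by rw [Category.assoc, h₁]⟩

lemma of_anodyne_comp {A D B : E} {σ : A ⟶ D} (hσ : Anodyne T.toClan σ) {f g : D ⟶ B}
    (h : Homotopic T (σ ≫ f) (σ ≫ g)) : Homotopic T f g := by
  obtain ⟨Q, H, h₀, h₁⟩ := h
  have hsq : H ≫ Q.pair = σ ≫ Q.isProd.lift f g (T.one_isTerminal.hom_ext _ _) := by
    apply Q.isProd.hom_ext
    · rw [Category.assoc, Q.pair_pr₁, h₀, Category.assoc, IsPullback.lift_fst]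
    · rw [Category.assoc, Q.pair_pr₂, h₁, Category.assoc, IsPullback.lift_snd]
  obtain ⟨K, -, hK⟩ := hσ.exists_lift Q.fib_pair hsq
  refine ⟨Q, K, ?_, ?_⟩
  · rw [← Q.pair_pr₁, ← Category.assoc, hK, IsPullback.lift_fst]
  · rw [← Q.pair_pr₂, ← Category.assoc, hK, IsPullback.lift_snd]

lemma comp_right {A B D : E} {f g : A ⟶ B} (h : Homotopic T f g) (w : B ⟶ D) :
    Homotopic T (f ≫ w) (g ≫ w) := by
  obtain ⟨Q, H, rfl, rfl⟩ := h
  have hσ : Q.σ ≫ Q.d₀ ≫ w = Q.σ ≫ Q.d₁ ≫ w := by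
    rw [← Category.assoc, ← Category.assoc, Q.σ_d₀, Q.σ_d₁]
  simpa only [Category.assoc] using
    (of_anodyne_comp Q.anodyne_σ (hσ ▸ refl _)).comp_left H

/-- Concatenation: the two homotopies meet in `PB ×_B P'B`, into which `PB` includes
anodynely. -/
lemma trans {A B : E} {f g h : A ⟶ B} (hfg : Homotopic T f g) (hgh : Homotopic T g h) :
    Homotopic T f h := by
  obtain ⟨Q, H, rfl, hH⟩ := hfg
  obtain ⟨Q', H', hH', rfl⟩ := hgh
  obtain ⟨C, c, c', hC⟩ := T.carrable Q.d₁ Q'.fib_d₀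
  let j := hC.lift (𝟙 Q.P) (Q.d₁ ≫ Q'.σ) (by simp [Q'.σ_d₀])
  have hends : Homotopic T (j ≫ c ≫ Q.d₀) (j ≫ c' ≫ Q'.d₁) := by
    simpa [j, Q'.σ_d₁] using ⟨Q, 𝟙 Q.P, Category.id_comp _, Category.id_comp _⟩
  simpa using (of_anodyne_comp (Q'.anodyne_lift_σ Q.fib_d₁ hC) hends).comp_left
    (hC.lift H H' (hH.trans hH'.symm))

lemma of_retraction {A D : E} {u : A ⟶ D} (hu : Anodyne T.toClan u) {r : D ⟶ A}
    (hr : u ≫ r = 𝟙 A) : Homotopic T (r ≫ u) (𝟙 D) :=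
  of_anodyne_comp hu <| by
    rw [← Category.assoc, hr, Category.id_comp, Category.comp_id]
    exact refl u

lemma exists_lift_fib {A Y D : E} {p : Y ⟶ D} (hp : T.fib p) {a : A ⟶ Y} {b : A ⟶ D}
    (h : Homotopic T (a ≫ p) b) : ∃ a' : A ⟶ Y, a' ≫ p = b := by
  obtain ⟨Q, H, h₀, rfl⟩ := h
  obtain ⟨W, _, w', hW⟩ := T.carrable p Q.fib_d₀
  obtain ⟨L, -, hL⟩ := (Q.anodyne_lift_σ hp hW).exists_lift hp (a := 𝟙 Y) (b := w' ≫ Q.d₁)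
    (by simp [Q.σ_d₁])
  exact ⟨hW.lift a H h₀.symm ≫ L, by simp [hL]⟩

end Homotopic

lemma IsHomotopyEquiv.exists_section {T : Tribe E} {X B : E} {f : X ⟶ B} (hf : T.fib f)
    (h : IsHomotopyEquiv T f) : ∃ s : B ⟶ X, s ≫ f = 𝟙 B ∧ Homotopic T (f ≫ s) (𝟙 X) := by
  obtain ⟨g, hfg, hgf⟩ := h
  obtain ⟨s, hs⟩ := hgf.exists_lift_fib hf
  have hsfg : (f ≫ s) ≫ f ≫ g = f ≫ g := by
    rw [Category.assoc, ← Category.assoc s, hs, Category.id_comp]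
  have hfs := hfg.comp_left (f ≫ s)
  rw [hsfg, Category.comp_id] at hfs
  exact ⟨s, hs, hfs.symm.trans hfg⟩

lemma homotopic_id_of_retract {T : Tribe E} {A Z X : E} {u : A ⟶ Z} (hu : Anodyne T.toClan u)
    {ζ : Z ⟶ A} (hζ : u ≫ ζ = 𝟙 A) {r : X ⟶ Z} {q : Z ⟶ X} (hrq : r ≫ q = 𝟙 X) :
    Homotopic T (r ≫ ζ ≫ u ≫ q) (𝟙 X) := by
  simpa [hrq] using ((Homotopic.of_retraction hu hζ).comp_right q).comp_left r

namespace TribeSlice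

variable {T : Tribe E} {B : E}

@[simp]
lemma homOf_comp_left {U V W : TribeSlice T B} (u : U ⟶ V) (v : V ⟶ W) :
    (homOf (u ≫ v)).left = (homOf u).left ≫ (homOf v).left := rfl

@[simp]
lemma homOf_id_left (U : TribeSlice T B) : (homOf (𝟙 U)).left = 𝟙 U.obj.left := rfl

@[simp]
lemma homOf_homMk_left {U V : TribeSlice T B} (g : U.obj.left ⟶ V.obj.left)
    (w : g ≫ V.obj.hom = U.obj.hom) :
    (homOf (ObjectProperty.homMk (Over.homMk g w) : U ⟶ V)).left = g := rfl

lemma hom_ext {U V : TribeSlice T B} {u v : U ⟶ V} (h : (homOf u).left = (homOf v).left) :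
    u = v :=
  ObjectProperty.hom_ext _ (Over.OverMorphism.ext h)

lemma homOf_left_comp_hom {U V : TribeSlice T B} (u : U ⟶ V) :
    (homOf u).left ≫ V.obj.hom = U.obj.hom :=
  Over.w (homOf u)

variable {TB : Tribe (TribeSlice T B)}

/-- To lift against a fibration `p` of `E`, lift in `E(B)` against its base change to the
codomain. -/
lemma anodyne_homOf_left
    (hTB : ∀ {U V : TribeSlice T B} (u : U ⟶ V), T.fib (homOf u).left → TB.fib u)
    {U V : TribeSlice T B} {u : U ⟶ V} (hu : Anodyne TB.toClan u) :
    Anodyne T.toClan (homOf u).left := by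
  refine fun Y Z p hp => ⟨fun {a b} sq => ?_⟩
  obtain ⟨P, p₁, p₂, hP⟩ := T.carrable b hp
  have hp₁ : T.fib p₁ := T.fib_baseChange hP hp
  let V' : TribeSlice T B := ⟨Over.mk (p₁ ≫ V.obj.hom), T.fib_comp hp₁ V.property⟩
  let π : V' ⟶ V := ObjectProperty.homMk (Over.homMk p₁ rfl)
  let a' : U ⟶ V' := ObjectProperty.homMk (Over.homMk (hP.lift _ a sq.w.symm)
    (by
      change _ ≫ p₁ ≫ V.obj.hom = _
      rw [← Category.assoc, hP.lift_fst, homOf_left_comp_hom]))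
  obtain ⟨l, hl, hlπ⟩ := hu.exists_lift (hTB π hp₁) (a := a') (b := 𝟙 V)
    (hom_ext (by simp [π, a']))
  refine ⟨⟨(homOf l).left ≫ p₂, ?_, ?_⟩⟩
  · simpa [a'] using congrArg (fun m => (homOf m).left ≫ p₂) hl
  · have := congrArg (fun m => (homOf m).left) hlπ
    simp only [homOf_comp_left, homOf_homMk_left, homOf_id_left, π] at this
    rw [Category.assoc, ← hP.w, ← Category.assoc, this, Category.id_comp]

lemma _root_.Homotopic.homOf_left
    (hTB : ∀ {U V : TribeSlice T B} (u : U ⟶ V), T.fib (homOf u).left → TB.fib u)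
    {U V : TribeSlice T B} {u v : U ⟶ V}
    (h : Homotopic TB u v) : Homotopic T (homOf u).left (homOf v).left := by
  obtain ⟨Q, H, rfl, rfl⟩ := h
  have hσ : (homOf Q.σ).left ≫ (homOf Q.d₀).left = (homOf Q.σ).left ≫ (homOf Q.d₁).left := by
    rw [← homOf_comp_left, ← homOf_comp_left, Q.σ_d₀, Q.σ_d₁]
  simpa using ((Homotopic.of_anodyne_comp (anodyne_homOf_left hTB Q.anodyne_σ)
    (hσ ▸ Homotopic.refl _)).comp_left (homOf H).left)

variable {X : E} {f : X ⟶ B}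

lemma contractible_of_isHomotopyEquiv (hf : T.fib f)
    (hTB : ∀ {U V : TribeSlice T B} (u : U ⟶ V), TB.fib u → T.fib (homOf u).left)
    (h : IsHomotopyEquiv T f) :
    IsHomotopyEquiv TB
      (X := ⟨Over.mk f, hf⟩)
      (Y := ⟨Over.mk (𝟙 B), T.fib_of_isIso (𝟙 B) inferInstance⟩)
      (ObjectProperty.homMk (Over.homMk f (by simp))) := by
  obtain ⟨s, hs, hfs⟩ := h.exists_section hf
  let sb : (⟨Over.mk (𝟙 B), T.fib_of_isIso (𝟙 B) inferInstance⟩ : TribeSlice T B) ⟶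
      ⟨Over.mk f, hf⟩ := ObjectProperty.homMk (Over.homMk s (by simpa using hs))
  obtain ⟨Z, u, q, hu, hq, huq⟩ := TB.exists_fact sb
  have huq' : (homOf u).left ≫ (homOf q).left = s := by rw [← homOf_comp_left, huq]; rfl
  obtain ⟨r, hr⟩ := Homotopic.exists_lift_fib (hTB q hq) (a := f ≫ (homOf u).left)
    (by rwa [Category.assoc, huq'])
  have hrZ : r ≫ Z.obj.hom = f := by
    rw [← homOf_left_comp_hom q, ← Category.assoc, hr, Category.id_comp]; rfl
  let ζ : Z ⟶ ⟨Over.mk (𝟙 B), T.fib_of_isIso (𝟙 B) inferInstance⟩ :=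
    ObjectProperty.homMk (Over.homMk Z.obj.hom (Category.comp_id _))
  let rb : (⟨Over.mk f, hf⟩ : TribeSlice T B) ⟶ Z := ObjectProperty.homMk (Over.homMk r hrZ)
  have hretract := homotopic_id_of_retract hu (ζ := ζ) (hom_ext (homOf_left_comp_hom u))
    (r := rb) (q := q) (hom_ext hr)
  refine ⟨sb, ?_, ?_⟩
  · convert hretract using 1
    refine hom_ext ?_
    simp [ζ, rb, sb, huq', reassoc_of% hrZ]
  · convert Homotopic.refl (𝟙 _) using 1
    exact hom_ext hs

lemma isHomotopyEquiv_of_contractible (hf : T.fib f)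
    (hTB : ∀ {U V : TribeSlice T B} (u : U ⟶ V), T.fib (homOf u).left → TB.fib u)
    (h : IsHomotopyEquiv TB
      (X := ⟨Over.mk f, hf⟩)
      (Y := ⟨Over.mk (𝟙 B), T.fib_of_isIso (𝟙 B) inferInstance⟩)
      (ObjectProperty.homMk (Over.homMk f (by simp)))) :
    IsHomotopyEquiv T f := by
  obtain ⟨g, hfg, -⟩ := h
  have hs : (homOf g).left ≫ f = 𝟙 B := by simpa using homOf_left_comp_hom g
  refine ⟨(homOf g).left, hfg.homOf_left hTB, ?_⟩
  rw [hs]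
  exact Homotopic.refl _

end TribeSlice

/-- A fibration `f : X ⟶ B` in a tribe `E` is a homotopy equivalence
iff the object `(X, f)` of the local tribe `E(B)` is contractible, i.e. the map
`(X, f) ⟶ (B, 1_B)` to the terminal object of `E(B)` is a homotopy equivalence in
`E(B)`.  Here `TB` is the canonical tribe structure on `E(B)`, in which a map is a
fibration iff its underlying map in `E` is. -/
theorem trivialFibration_iff_contractible {E : Type u} [Category.{v} E] (T : Tribe E)
    {X B : E} (f : X ⟶ B) (hf : T.fib f)
    (TB : Tribe (TribeSlice T B))
    (hTB : ∀ {U V : TribeSlice T B} (u : U ⟶ V),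
      TB.fib u ↔ T.fib (TribeSlice.homOf u).left) :
    IsHomotopyEquiv T f ↔
      IsHomotopyEquiv TB
        (X := ⟨Over.mk f, hf⟩)
        (Y := ⟨Over.mk (𝟙 B), T.fib_of_isIso (𝟙 B) inferInstance⟩)
        (ObjectProperty.homMk (Over.homMk f (by simp))) :=
  ⟨TribeSlice.contractible_of_isHomotopyEquiv hf (hTB · |>.mp),
    TribeSlice.isHomotopyEquiv_of_contractible hf (hTB · |>.mpr)⟩
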